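/- arXiv:1801.08070 — 3 statements merged into one kernel-verified Lean document; each statement's English description precedes it below -/
import Mathlib

section
/- Let α, β, λ > 0 and let U, V, W be independent real-valued random variables with U ~ Beta(α+λ, β), 1/V ~ Beta(λ, α), and W ~ Beta(α, β). Set W' = U·(V−1)/(V−U). Then the law of the random variable W'/U is not a beta distribution: for every γ, δ > 0, the law of W'/U is different from the measure Beta(γ, δ). -/
/-!
Write `Z = W'/U = (V - 1)/(V - U)` and `X = 1/V`. Then `(1 - Z)/Z = (1 - U) · X/(1 - X)` with
`X` and `U` independent, so for every real `s`
`E[((1 - Z)/Z)^s] = E[(X/(1 - X))^s] · E[(1 - U)^s]`.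
All three moments are ratios of beta integrals `B(a, b) = ∫₀¹ x^(a-1) (1-x)^(b-1) dx` taken in
`[0, ∞]`, which are finite exactly when `a, b > 0`. If `Z ~ Beta(γ, δ)` the left side is
`B(γ - s, δ + s)/B(γ, δ)`, and comparing the sets of `s` on which the two sides are finite forces
`γ = α` and `δ = min(λ, β)`. At `s = α/2` the identity then collapses to
`B(c, d + s) = B(c, d)` for some `c, d > 0`, contradicting the strict decrease of `B`.
-/

open MeasureTheory ProbabilityTheory

/-- The Beta(a,b) probability measure on ℝ: supported on (0,1) with density
`x ↦ x^(a-1) * (1-x)^(b-1) * Γ(a+b) / (Γ(a) * Γ(b))`. -/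
noncomputable def betaMeasure (a b : ℝ) : Measure ℝ :=
  volume.withDensity fun x =>
    ENNReal.ofReal ((Set.Ioo (0 : ℝ) 1).indicator
      (fun x => x ^ (a - 1) * (1 - x) ^ (b - 1) * Real.Gamma (a + b) /
        (Real.Gamma a * Real.Gamma b)) x)

open scoped ENNReal
open Set

noncomputable def betaLIntegral (a b : ℝ) : ℝ≥0∞ :=
  ∫⁻ x in Ioo 0 1, ENNReal.ofReal (x ^ (a - 1) * (1 - x) ^ (b - 1))

theorem betaLIntegral_eq_ofReal_beta {a b : ℝ} (ha : 0 < a) (hb : 0 < b) :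
    betaLIntegral a b = ENNReal.ofReal (beta a b) := by
  have hB := beta_pos ha hb
  have h : ENNReal.ofReal (beta a b)⁻¹ * betaLIntegral a b = 1 := by
    rw [← lintegral_betaPDF_eq_one ha hb, lintegral_betaPDF, betaLIntegral,
      ← lintegral_const_mul _ (by fun_prop)]
    refine setLIntegral_congr_fun measurableSet_Ioo fun x hx => ?_
    have : 0 ≤ 1 - x := by linarith [hx.2]
    rw [← ENNReal.ofReal_mul (by positivity), one_div, mul_assoc]
  rw [mul_comm] at h
  rw [ENNReal.eq_inv_of_mul_eq_one_left h, ENNReal.ofReal_inv_of_pos hB, inv_inv]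

theorem betaLIntegral_comm (a b : ℝ) : betaLIntegral a b = betaLIntegral b a := by
  have hreflect : MeasurePreserving (fun x : ℝ => 1 - x) volume volume := by
    simpa [Function.comp_def, sub_eq_add_neg] using
      (measurePreserving_add_left volume (1 : ℝ)).comp (Measure.measurePreserving_neg volume)
  have hpre : (fun x : ℝ => 1 - x) ⁻¹' Ioo 0 1 = Ioo 0 1 := by
    ext x
    simp only [mem_preimage, mem_Ioo]
    constructor <;> intro h <;> constructor <;> linarith [h.1, h.2]
  rw [betaLIntegral, betaLIntegral,
    ← hreflect.setLIntegral_comp_preimage measurableSet_Ioo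
      (f := fun x => ENNReal.ofReal (x ^ (b - 1) * (1 - x) ^ (a - 1)))
      (by fun_prop), hpre]
  simp only [sub_sub_cancel, mul_comm]

theorem setLIntegral_Ioo_rpow_eq_top {r t : ℝ} (hr : r ≤ -1) (ht : 0 < t) :
    ∫⁻ x in Ioo 0 t, ENNReal.ofReal (x ^ r) = ⊤ := by
  by_contra h
  have hint : IntegrableOn (fun x : ℝ => x ^ r) (Ioo 0 t) :=
    ⟨(measurable_id.pow_const r).aestronglyMeasurable,
      (hasFiniteIntegral_iff_ofReal ((ae_restrict_iff' measurableSet_Ioo).mpr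
        (ae_of_all _ fun x hx => Real.rpow_nonneg hx.1.le r))).mpr (lt_top_iff_ne_top.mpr h)⟩
  linarith [(intervalIntegral.integrableOn_Ioo_rpow_iff ht).mp hint]

theorem betaLIntegral_eq_top_of_nonpos_left {a : ℝ} (b : ℝ) (ha : a ≤ 0) :
    betaLIntegral a b = ⊤ := by
  set c : ℝ := min ((1 / 2) ^ (b - 1)) 1
  have hc : 0 < c := lt_min (by positivity) one_pos
  have hbound : ∀ x ∈ Ioo (0 : ℝ) (1 / 2),
      c * x ^ (a - 1) ≤ x ^ (a - 1) * (1 - x) ^ (b - 1) := by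
    intro x ⟨hx0, hx2⟩
    have hc_le : c ≤ (1 - x) ^ (b - 1) := by
      rcases le_total 0 (b - 1) with h | h
      · exact (min_le_left _ _).trans (Real.rpow_le_rpow (by norm_num) (by linarith) h)
      · exact (min_le_right _ _).trans
          (Real.one_le_rpow_of_pos_of_le_one_of_nonpos (by linarith) (by linarith) h)
    rw [mul_comm]
    exact mul_le_mul_of_nonneg_left hc_le (Real.rpow_nonneg hx0.le _)
  refine top_unique ?_
  calc ⊤ = ENNReal.ofReal c * ∫⁻ x in Ioo 0 (1 / 2), ENNReal.ofReal (x ^ (a - 1)) := by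
        rw [setLIntegral_Ioo_rpow_eq_top (by linarith) (by norm_num),
          ENNReal.mul_top (by simpa using hc)]
    _ = ∫⁻ x in Ioo 0 (1 / 2), ENNReal.ofReal (c * x ^ (a - 1)) := by
        simp only [ENNReal.ofReal_mul hc.le]
        exact (lintegral_const_mul _ (by fun_prop)).symm
    _ ≤ ∫⁻ x in Ioo 0 (1 / 2), ENNReal.ofReal (x ^ (a - 1) * (1 - x) ^ (b - 1)) :=
        setLIntegral_mono' measurableSet_Ioo fun x hx => ENNReal.ofReal_le_ofReal (hbound x hx)
    _ ≤ betaLIntegral a b := lintegral_mono_set (Ioo_subset_Ioo_right (by norm_num))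

theorem betaLIntegral_ne_top_iff {a b : ℝ} : betaLIntegral a b ≠ ⊤ ↔ 0 < a ∧ 0 < b := by
  refine ⟨fun h => ⟨?_, ?_⟩, fun h => ?_⟩
  · by_contra! ha; exact h (betaLIntegral_eq_top_of_nonpos_left b ha)
  · by_contra! hb; exact h (betaLIntegral_comm a b ▸ betaLIntegral_eq_top_of_nonpos_left a hb)
  · simp [betaLIntegral_eq_ofReal_beta h.1 h.2]

theorem betaLIntegral_ne_zero (a b : ℝ) : betaLIntegral a b ≠ 0 := by
  by_cases h : 0 < a ∧ 0 < b
  · simpa [betaLIntegral_eq_ofReal_beta h.1 h.2] using beta_pos h.1 h.2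
  · exact fun h0 => h (betaLIntegral_ne_top_iff.mp (by simp [h0]))

theorem betaLIntegral_add_left_lt {a b s : ℝ} (ha : 0 < a) (hb : 0 < b) (hs : 0 < s) :
    betaLIntegral (a + s) b < betaLIntegral a b :=
  setLIntegral_strict_mono measurableSet_Ioo (by simp) (by fun_prop)
    (betaLIntegral_ne_top_iff.mpr ⟨by linarith, hb⟩) <| ae_of_all _ fun x hx => by
      have h1 : x ^ (a + s - 1) < x ^ (a - 1) :=
        Real.rpow_lt_rpow_of_exponent_gt hx.1 hx.2 (by linarith)
      have h0 : 0 < x ^ (a - 1) := Real.rpow_pos_of_pos hx.1 _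
      have h2 : 0 < (1 - x) ^ (b - 1) := Real.rpow_pos_of_pos (by linarith [hx.2]) _
      exact (ENNReal.ofReal_lt_ofReal_iff (by positivity)).mpr (by gcongr)

theorem betaMeasure_eq_smul_withDensity {a b : ℝ} (ha : 0 < a) (hb : 0 < b) :
    _root_.betaMeasure a b = (betaLIntegral a b)⁻¹ •
      (volume.restrict (Ioo 0 1)).withDensity
        fun x => ENNReal.ofReal (x ^ (a - 1) * (1 - x) ^ (b - 1)) := by
  rw [← withDensity_smul _ (by fun_prop),
    ← withDensity_indicator measurableSet_Ioo, _root_.betaMeasure]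
  congr 1
  funext x
  by_cases hx : x ∈ Ioo (0 : ℝ) 1
  · have h1 : 0 ≤ 1 - x := by linarith [hx.2]
    have hx0 := hx.1.le
    rw [indicator_of_mem hx, indicator_of_mem hx, Pi.smul_apply, smul_eq_mul,
      betaLIntegral_eq_ofReal_beta ha hb, ← ENNReal.ofReal_inv_of_pos (beta_pos ha hb),
      ← ENNReal.ofReal_mul (inv_nonneg.mpr (beta_pos ha hb).le), beta, inv_div]
    congr 1
    ring
  · simp [indicator_of_notMem hx]

theorem ae_mem_Ioo_betaMeasure {a b : ℝ} (ha : 0 < a) (hb : 0 < b) :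
    ∀ᵐ x ∂_root_.betaMeasure a b, x ∈ Ioo 0 1 := by
  rw [betaMeasure_eq_smul_withDensity ha hb]
  exact Measure.ae_smul_measure
    ((withDensity_absolutelyContinuous _ _).ae_le (ae_restrict_mem measurableSet_Ioo)) _

theorem lintegral_rpow_mul_one_sub_rpow_betaMeasure {a b : ℝ} (ha : 0 < a) (hb : 0 < b)
    (p q : ℝ) :
    ∫⁻ x, ENNReal.ofReal (x ^ p * (1 - x) ^ q) ∂_root_.betaMeasure a b =
      betaLIntegral (a + p) (b + q) / betaLIntegral a b := by
  rw [betaMeasure_eq_smul_withDensity ha hb, lintegral_smul_measure,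
    lintegral_withDensity_eq_lintegral_mul _ (by fun_prop) (by fun_prop), smul_eq_mul,
    ENNReal.div_eq_inv_mul, betaLIntegral]
  congr 1
  refine setLIntegral_congr_fun measurableSet_Ioo fun x hx => ?_
  have h1 : 0 < 1 - x := by linarith [hx.2]
  have hx0 := hx.1
  rw [Pi.mul_apply, ← ENNReal.ofReal_mul (by positivity)]
  congr 1
  rw [show a + p - 1 = (a - 1) + p by ring, show b + q - 1 = (b - 1) + q by ring,
    Real.rpow_add hx0, Real.rpow_add h1]
  ring

theorem lintegral_one_sub_rpow_betaMeasure {a b : ℝ} (ha : 0 < a) (hb : 0 < b) (s : ℝ) :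
    ∫⁻ x, ENNReal.ofReal (1 - x) ^ s ∂_root_.betaMeasure a b =
      betaLIntegral a (b + s) / betaLIntegral a b := by
  have h := lintegral_rpow_mul_one_sub_rpow_betaMeasure ha hb 0 s
  rw [add_zero] at h
  rw [← h]
  refine lintegral_congr_ae ((ae_mem_Ioo_betaMeasure ha hb).mono fun x hx => ?_)
  dsimp only
  rw [Real.rpow_zero, one_mul, ENNReal.ofReal_rpow_of_pos (by linarith [hx.2])]

theorem lintegral_div_one_sub_rpow_betaMeasure {a b : ℝ} (ha : 0 < a) (hb : 0 < b) (s : ℝ) :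
    ∫⁻ x, ENNReal.ofReal (x / (1 - x)) ^ s ∂_root_.betaMeasure a b =
      betaLIntegral (a + s) (b - s) / betaLIntegral a b := by
  rw [sub_eq_add_neg b, ← lintegral_rpow_mul_one_sub_rpow_betaMeasure ha hb s (-s)]
  refine lintegral_congr_ae ((ae_mem_Ioo_betaMeasure ha hb).mono fun x hx => ?_)
  have h1 : 0 < 1 - x := by linarith [hx.2]
  dsimp only
  rw [ENNReal.ofReal_rpow_of_pos (div_pos hx.1 h1), Real.div_rpow hx.1.le h1.le,
    Real.rpow_neg h1.le, div_eq_mul_inv]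

theorem lintegral_one_sub_div_rpow_betaMeasure {a b : ℝ} (ha : 0 < a) (hb : 0 < b) (s : ℝ) :
    ∫⁻ x, ENNReal.ofReal ((1 - x) / x) ^ s ∂_root_.betaMeasure a b =
      betaLIntegral (a - s) (b + s) / betaLIntegral a b := by
  rw [sub_eq_add_neg a, ← lintegral_rpow_mul_one_sub_rpow_betaMeasure ha hb (-s) s]
  refine lintegral_congr_ae ((ae_mem_Ioo_betaMeasure ha hb).mono fun x hx => ?_)
  have h1 : 0 < 1 - x := by linarith [hx.2]
  dsimp only
  rw [ENNReal.ofReal_rpow_of_pos (div_pos h1 hx.1), Real.div_rpow h1.le hx.1.le,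
    Real.rpow_neg hx.1.le, div_eq_mul_inv, mul_comm]

theorem one_sub_div_eq_mul_of_mem_Ioo {u v : ℝ} (hu : u ∈ Ioo 0 1) (hv : v⁻¹ ∈ Ioo 0 1) :
    (1 - u * (v - 1) / (v - u) / u) / (u * (v - 1) / (v - u) / u) =
      v⁻¹ / (1 - v⁻¹) * (1 - u) := by
  obtain ⟨hu0, hu1⟩ := hu
  have hv0 : 0 < v := inv_pos.mp hv.1
  have hv1 : 1 < v := by simpa using (inv_lt_one₀ hv0).mp hv.2
  have hvu : v - u ≠ 0 := by linarith
  have hv1' : v - 1 ≠ 0 := by linarith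
  field_simp
  ring

theorem lintegral_one_sub_div_rpow_eq_mul {Ω : Type*} [MeasurableSpace Ω] {μ : Measure Ω}
    {U V : Ω → ℝ} (hU : Measurable U) (hV : Measurable V) (hVU : IndepFun V U μ)
    (hUmem : ∀ᵐ ω ∂μ, U ω ∈ Ioo 0 1) (hVmem : ∀ᵐ ω ∂μ, (V ω)⁻¹ ∈ Ioo 0 1) (s : ℝ) :
    ∫⁻ ω, ENNReal.ofReal ((1 - (U ω * (V ω - 1) / (V ω - U ω)) / U ω) /
        ((U ω * (V ω - 1) / (V ω - U ω)) / U ω)) ^ s ∂μ =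
      (∫⁻ ω, ENNReal.ofReal ((V ω)⁻¹ / (1 - (V ω)⁻¹)) ^ s ∂μ) *
        ∫⁻ ω, ENNReal.ofReal (1 - U ω) ^ s ∂μ := by
  have hf : Measurable fun v : ℝ => ENNReal.ofReal (v⁻¹ / (1 - v⁻¹)) ^ s := by fun_prop
  have hg : Measurable fun u : ℝ => ENNReal.ofReal (1 - u) ^ s := by fun_prop
  refine (lintegral_congr_ae ((hUmem.and hVmem).mono fun ω ⟨hu, hv⟩ => ?_)).trans
    (lintegral_mul_eq_lintegral_mul_lintegral_of_indepFun (hf.comp hV) (hg.comp hU)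
      (hVU.comp hf hg))
  have h1 : 0 < (V ω)⁻¹ / (1 - (V ω)⁻¹) := div_pos hv.1 (by linarith [hv.2])
  rw [one_sub_div_eq_mul_of_mem_Ioo hu hv, ENNReal.ofReal_mul h1.le,
    ENNReal.mul_rpow_of_ne_top ENNReal.ofReal_ne_top ENNReal.ofReal_ne_top]
  rfl

namespace ProbabilityTheory

theorem beta_comm (a b : ℝ) : beta a b = beta b a := by
  rw [beta, beta, mul_comm, add_comm]

theorem beta_sub_add_div_beta {a b : ℝ} (ha : 0 < a) (hb : 0 < b) (s : ℝ) :
    beta (a - s) (b + s) / beta a b =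
      Real.Gamma (a - s) * Real.Gamma (b + s) / (Real.Gamma a * Real.Gamma b) := by
  have := Real.Gamma_pos_of_pos (add_pos ha hb)
  rw [beta, beta, show a - s + (b + s) = a + b by ring]
  field_simp

theorem beta_add_right_div_beta {a b : ℝ} (ha : 0 < a) (hb : 0 < b) (s : ℝ) :
    beta a (b + s) / beta a b =
      Real.Gamma (b + s) * Real.Gamma (a + b) / (Real.Gamma b * Real.Gamma (a + b + s)) := by
  have := Real.Gamma_pos_of_pos ha
  have := Real.Gamma_pos_of_pos hb
  have := Real.Gamma_pos_of_pos (add_pos ha hb)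
  rw [beta, beta, ← add_assoc]
  field_simp

theorem toReal_betaLIntegral_div {a b c d : ℝ} (ha : 0 < a) (hb : 0 < b) (hc : 0 < c)
    (hd : 0 < d) : (betaLIntegral a b / betaLIntegral c d).toReal = beta a b / beta c d := by
  rw [ENNReal.toReal_div, betaLIntegral_eq_ofReal_beta ha hb, betaLIntegral_eq_ofReal_beta hc hd,
    ENNReal.toReal_ofReal (beta_pos ha hb).le, ENNReal.toReal_ofReal (beta_pos hc hd).le]

theorem beta_add_right_lt {a b s : ℝ} (ha : 0 < a) (hb : 0 < b) (hs : 0 < s) :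
    beta a (b + s) < beta a b := by
  have h := betaLIntegral_add_left_lt hb ha hs
  rwa [betaLIntegral_eq_ofReal_beta (by linarith) ha, betaLIntegral_eq_ofReal_beta hb ha,
    ENNReal.ofReal_lt_ofReal_iff (beta_pos hb ha), beta_comm (b + s), beta_comm b] at h

end ProbabilityTheory

theorem betaLIntegral_div_ne_top_iff {a b c d : ℝ} (hc : 0 < c) (hd : 0 < d) :
    betaLIntegral a b / betaLIntegral c d ≠ ⊤ ↔ 0 < a ∧ 0 < b := by
  rw [← betaLIntegral_ne_top_iff, Ne, ENNReal.div_eq_top]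
  simp [betaLIntegral_ne_zero, betaLIntegral_ne_top_iff.mpr ⟨hc, hd⟩]

theorem betaLIntegral_div_ne_zero (a b : ℝ) {c d : ℝ} (hc : 0 < c) (hd : 0 < d) :
    betaLIntegral a b / betaLIntegral c d ≠ 0 := by
  simp [ENNReal.div_eq_zero_iff, betaLIntegral_ne_zero, betaLIntegral_ne_top_iff.mpr ⟨hc, hd⟩]

theorem Set.eq_and_eq_of_Ioo_eq_Ioo {X : Type*} [LinearOrder X] [DenselyOrdered X] {a b c d : X}
    (hab : a < b) (h : Ioo a b = Ioo c d) : a = c ∧ b = d := by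
  have hcd : c < d := nonempty_Ioo.mp (h ▸ nonempty_Ioo.mpr hab)
  obtain ⟨hca, hbd⟩ := (Ioo_subset_Ioo_iff hab).mp h.le
  obtain ⟨hac, hdb⟩ := (Ioo_subset_Ioo_iff hcd).mp h.ge
  exact ⟨le_antisymm hac hca, le_antisymm hbd hdb⟩

theorem beta_ratio_ne_of_eq_or_eq {α β lam δ s : ℝ} (hα : 0 < α) (hβ : 0 < β) (hlam : 0 < lam)
    (hs : 0 < s) (hsα : s < α) (hδ : δ = lam ∨ δ = β) :
    beta (α - s) (δ + s) / beta α δ ≠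
      beta (lam + s) (α - s) / beta lam α * (beta (α + lam) (β + s) / beta (α + lam) β) := by
  have hαs : 0 < α - s := by linarith
  have hlt : ∀ {a b : ℝ}, 0 < a → 0 < b → beta a (b + s) / beta a b < 1 := fun ha hb =>
    (div_lt_one (beta_pos ha hb)).mpr (beta_add_right_lt ha hb hs)
  rw [beta_comm (lam + s), beta_comm lam]
  intro h
  rcases hδ with hδ | hδ <;> rw [hδ] at h
  · have hpos := div_pos (beta_pos hαs (add_pos hlam hs)) (beta_pos hα hlam)
    exact (hlt (add_pos hα hlam) hβ).ne ((left_eq_mul₀ hpos.ne').mp h)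
  · have hr := hlt (add_pos hα hβ) hlam
    rw [beta_sub_add_div_beta hα hβ, beta_sub_add_div_beta hα hlam,
      beta_add_right_div_beta (add_pos hα hlam) hβ] at h
    rw [beta_add_right_div_beta (add_pos hα hβ) hlam, add_right_comm α β lam] at hr
    have hpos : 0 < Real.Gamma (α - s) * Real.Gamma (β + s) / (Real.Gamma α * Real.Gamma β) := by
      have := Real.Gamma_pos_of_pos hαs
      have := Real.Gamma_pos_of_pos (add_pos hβ hs)
      have := Real.Gamma_pos_of_pos hα
      have := Real.Gamma_pos_of_pos hβ
      positivity
    exact hr.ne ((left_eq_mul₀ hpos.ne').mp (h.trans (by ring)))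

theorem not_forall_betaLIntegral_div_eq {α β lam γ δ : ℝ} (hα : 0 < α) (hβ : 0 < β)
    (hlam : 0 < lam) (hγ : 0 < γ) (hδ : 0 < δ) :
    ¬ ∀ s : ℝ, betaLIntegral (γ - s) (δ + s) / betaLIntegral γ δ =
      betaLIntegral (lam + s) (α - s) / betaLIntegral lam α *
        (betaLIntegral (α + lam) (β + s) / betaLIntegral (α + lam) β) := by
  intro h
  have hαlam : 0 < α + lam := add_pos hα hlam
  -- both sides are finite for exactly the same exponents `s`
  have hIoo : Ioo (-δ) γ = Ioo (max (-lam) (-β)) α := by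
    ext s
    have hfin := betaLIntegral_div_ne_top_iff (a := γ - s) (b := δ + s) hγ hδ
    rw [h s, Ne, ENNReal.mul_eq_top] at hfin
    simp only [ne_eq, betaLIntegral_div_ne_zero _ _ hlam hα,
      betaLIntegral_div_ne_zero _ _ hαlam hβ, not_false_eq_true, true_and, and_true,
      not_or] at hfin
    rw [← Ne, ← Ne, betaLIntegral_div_ne_top_iff hlam hα,
      betaLIntegral_div_ne_top_iff hαlam hβ] at hfin
    simp only [mem_Ioo, max_lt_iff, neg_lt_iff_pos_add', sub_pos] at hfin ⊢
    tauto
  obtain ⟨hδ_eq, rfl⟩ := Set.eq_and_eq_of_Ioo_eq_Ioo (by linarith) hIoo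
  have hδ' : δ = lam ∨ δ = β := by
    rcases max_choice (-lam) (-β) with hm | hm <;> rw [hm, neg_inj] at hδ_eq <;> tauto
  have hs := congrArg ENNReal.toReal (h (γ / 2))
  rw [ENNReal.toReal_mul, toReal_betaLIntegral_div (by linarith) (by linarith) hγ hδ,
    toReal_betaLIntegral_div (by linarith) (by linarith) hlam hγ,
    toReal_betaLIntegral_div hαlam (by linarith) hαlam hβ] at hs
  exact beta_ratio_ne_of_eq_or_eq hγ hβ hlam (by linarith) (by linarith) hδ' hs

theorem doob_transition_not_beta_distributed_general
    {Ω : Type*} [MeasurableSpace Ω] (μ : Measure Ω)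
    (α β lam : ℝ) (hα : 0 < α) (hβ : 0 < β) (hlam : 0 < lam)
    (U V W : Ω → ℝ) (hU : Measurable U) (hV : Measurable V)
    (hindep : iIndepFun ![U, V, W] μ)
    (hUlaw : μ.map U = _root_.betaMeasure (α + lam) β)
    (hVlaw : μ.map (fun ω => (V ω)⁻¹) = _root_.betaMeasure lam α) :
    ∀ γ δ : ℝ, 0 < γ → 0 < δ →
      μ.map (fun ω => (U ω * (V ω - 1) / (V ω - U ω)) / U ω) ≠ _root_.betaMeasure γ δ := by
  intro γ δ hγ hδ hlaw
  have hαlam : 0 < α + lam := add_pos hα hlam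
  have hUmem : ∀ᵐ ω ∂μ, U ω ∈ Ioo 0 1 :=
    ae_of_ae_map hU.aemeasurable (hUlaw ▸ ae_mem_Ioo_betaMeasure hαlam hβ)
  have hVmem : ∀ᵐ ω ∂μ, (V ω)⁻¹ ∈ Ioo 0 1 :=
    ae_of_ae_map hV.inv.aemeasurable (hVlaw ▸ ae_mem_Ioo_betaMeasure hlam hα)
  have hVU : IndepFun V U μ := by simpa using hindep.indepFun (show (1 : Fin 3) ≠ 0 by decide)
  refine not_forall_betaLIntegral_div_eq hα hβ hlam hγ hδ fun s => ?_
  rw [← lintegral_one_sub_div_rpow_betaMeasure hγ hδ, ← hlaw,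
    lintegral_map (by fun_prop) (by fun_prop),
    lintegral_one_sub_div_rpow_eq_mul hU hV hVU hUmem hVmem,
    ← lintegral_div_one_sub_rpow_betaMeasure hlam hα,
    ← lintegral_one_sub_rpow_betaMeasure hαlam hβ, ← hVlaw, ← hUlaw,
    lintegral_map (by fun_prop) (by fun_prop), lintegral_map (by fun_prop) hU]

/-- Proposition `pr:hypgeom`: if `U ~ Beta(α+λ, β)`, `1/V ~ Beta(λ, α)`, `W ~ Beta(α, β)`
are independent and `W' = U·(V−1)/(V−U)`, then the law of `W'/U` is not a beta
distribution. -/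
theorem doob_transition_not_beta_distributed
    {Ω : Type*} [MeasurableSpace Ω] (μ : Measure Ω) [IsProbabilityMeasure μ]
    (α β lam : ℝ) (hα : 0 < α) (hβ : 0 < β) (hlam : 0 < lam)
    (U V W : Ω → ℝ) (hU : Measurable U) (hV : Measurable V) (hW : Measurable W)
    (hindep : iIndepFun ![U, V, W] μ)
    (hUlaw : μ.map U = _root_.betaMeasure (α + lam) β)
    (hVlaw : μ.map (fun ω => (V ω)⁻¹) = _root_.betaMeasure lam α)
    (hWlaw : μ.map W = _root_.betaMeasure α β) :
    ∀ γ δ : ℝ, 0 < γ → 0 < δ →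
      μ.map (fun ω => (U ω * (V ω - 1) / (V ω - U ω)) / U ω) ≠ _root_.betaMeasure γ δ :=
  doob_transition_not_beta_distributed_general μ α β lam hα hβ hlam U V W hU hV hindep hUlaw hVlaw
end

section
/- For every x > 0, ψ₂(x)·ψ₄(x) > ψ₃(x)². Consequently, writing ψ₁⁻¹ : (0,∞) → (0,∞) for the inverse of the strictly decreasing bijection ψ₁ : (0,∞) → (0,∞), the composition ψ₂ ∘ ψ₁⁻¹ is strictly concave on (0,∞). -/
/-!
For `x > 0` and every `n`, `ψₙ₊₁(x) = (-1)ⁿ (n+1)! ζ(n+2, x)` with `ζ(p, x) = ∑ₖ (x + k)⁻ᵖ`: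
differentiating the Bohr–Mollerup limit of `log Γ` gives
`ψ₀(x) = -γ + ∑ₖ (1/(k+1) - 1/(x+k))`, and the series can then be differentiated termwise.
The inequality `ψ₃² < ψ₂ ψ₄` thus reads `36 ζ(4, x)² < 48 ζ(3, x) ζ(5, x)`, which follows from
the Cauchy–Schwarz inequality `ζ(4, x)² ≤ ζ(3, x) ζ(5, x)`. For `g = ψ₁⁻¹` one has
`g' = 1 / ψ₂ ∘ g`, hence `(ψ₂ ∘ g)'' = (ψ₂ ψ₄ - ψ₃²) / ψ₂³ ∘ g`, which is negative since `ψ₂ < 0`.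
-/

open Real Filter Set Topology

/-- The polygamma function `ψₙ`: the `(n+1)`-st derivative of `log ∘ Γ`. -/
noncomputable def polygamma (n : ℕ) (x : ℝ) : ℝ :=
  iteratedDeriv (n + 1) (fun y => Real.log (Real.Gamma y)) x

/-- The Hurwitz zeta function `ζ(p, x)` at a natural exponent; Mathlib's `hurwitzZeta` takes its
parameter in `ℝ / ℤ` rather than `x > 0`. -/
noncomputable def hurwitzNat (p : ℕ) (x : ℝ) : ℝ := ∑' k : ℕ, ((x + k) ^ p)⁻¹

lemma summable_inv_add_pow {p : ℕ} (hp : 2 ≤ p) (x : ℝ) :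
    Summable fun k : ℕ => ((x + k) ^ p)⁻¹ := by
  have h := (Real.summable_one_div_nat_add_rpow x p).mpr (by exact_mod_cast hp)
  refine Summable.of_norm (h.congr fun k => ?_)
  rw [Real.rpow_natCast, norm_inv, norm_pow, Real.norm_eq_abs, add_comm, one_div]

lemma hurwitzNat_pos {p : ℕ} (hp : 2 ≤ p) {x : ℝ} (hx : 0 < x) : 0 < hurwitzNat p x :=
  (summable_inv_add_pow hp x).tsum_pos (fun k => by positivity) 0 (by positivity)

lemma hasDerivAt_inv_add_pow (p : ℕ) {a y : ℝ} (hy : y + a ≠ 0) :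
    HasDerivAt (fun y => ((y + a) ^ p)⁻¹) (-p * ((y + a) ^ (p + 1))⁻¹) y := by
  have h := (((hasDerivAt_id' y).add_const a).fun_pow p).fun_inv (pow_ne_zero p hy)
  refine h.congr_deriv ?_
  rcases p with _ | p
  · simp
  · rw [Nat.add_sub_cancel]
    field_simp
    ring

lemma hasDerivAt_hurwitzNat {p : ℕ} (hp : 2 ≤ p) {x : ℝ} (hx : 0 < x) :
    HasDerivAt (hurwitzNat p) (-p * hurwitzNat (p + 1) x) x := by
  have hmem : x ∈ Ioi (x / 2) := by simp [hx]
  have hle (k : ℕ) {y : ℝ} (hy : y ∈ Ioi (x / 2)) : x / 2 + k ≤ y + k := by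
    simpa using hy.le
  have hbound (k : ℕ) (y : ℝ) (hy : y ∈ Ioi (x / 2)) :
      ‖-(p : ℝ) * ((y + k) ^ (p + 1))⁻¹‖ ≤ p * ((x / 2 + k) ^ (p + 1))⁻¹ := by
    have hyk : 0 < y + k := lt_of_lt_of_le (by positivity) (hle k hy)
    rw [norm_mul, norm_neg, Real.norm_natCast, norm_inv, norm_pow, Real.norm_eq_abs,
      abs_of_pos hyk]
    gcongr
    exact le_of_lt hy
  have h := hasDerivAt_tsum_of_isPreconnected
    ((summable_inv_add_pow (p := p + 1) (by omega) (x / 2)).mul_left (p : ℝ)) isOpen_Ioi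
    isPreconnected_Ioi
    (fun k y hy => hasDerivAt_inv_add_pow p (lt_of_lt_of_le (by positivity) (hle k hy)).ne')
    hbound hmem (summable_inv_add_pow hp x) hmem
  rwa [tsum_mul_left] at h

lemma sq_tsum_le_tsum_mul_tsum {ι : Type*} {r f g : ι → ℝ} (hr : Summable r) (hf : Summable f)
    (hg : Summable g) (hf0 : ∀ i, 0 ≤ f i) (hg0 : ∀ i, 0 ≤ g i)
    (hrfg : ∀ i, r i ^ 2 ≤ f i * g i) :
    (∑' i, r i) ^ 2 ≤ (∑' i, f i) * ∑' i, g i := by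
  refine le_of_tendsto (hr.hasSum.pow 2) (Eventually.of_forall fun s => ?_)
  calc (∑ i ∈ s, r i) ^ 2 ≤ (∑ i ∈ s, f i) * ∑ i ∈ s, g i :=
        Finset.sum_sq_le_sum_mul_sum_of_sq_le_mul s (fun i _ => hf0 i) (fun i _ => hg0 i)
          fun i _ => hrfg i
    _ ≤ (∑' i, f i) * ∑' i, g i :=
        mul_le_mul (hf.sum_le_tsum s fun i _ => hf0 i) (hg.sum_le_tsum s fun i _ => hg0 i)
          (Finset.sum_nonneg fun i _ => hg0 i) (tsum_nonneg hf0)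

lemma sq_hurwitzNat_le {p : ℕ} (hp : 2 ≤ p) {x : ℝ} (hx : 0 < x) :
    hurwitzNat (p + 1) x ^ 2 ≤ hurwitzNat p x * hurwitzNat (p + 2) x :=
  sq_tsum_le_tsum_mul_tsum (summable_inv_add_pow (by omega) x) (summable_inv_add_pow hp x)
    (summable_inv_add_pow (by omega) x) (fun k => by positivity) (fun k => by positivity)
    fun k => le_of_eq (by rw [← mul_inv, ← pow_add, inv_pow, ← pow_mul]; ring_nf)

lemma tendsto_harmonic_succ_sub_log :
    Tendsto (fun N : ℕ => (harmonic (N + 1) : ℝ) - log N) atTop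
      (𝓝 eulerMascheroniConstant) := by
  have h := tendsto_harmonic_sub_log.add (tendsto_one_div_add_atTop_nhds_zero_nat (𝕜 := ℝ))
  rw [add_zero] at h
  refine h.congr fun N => ?_
  push_cast [harmonic_succ]
  ring

lemma hasDerivAt_logGammaSeq (N : ℕ) {y : ℝ} (hy : 0 < y) :
    HasDerivAt (fun y => BohrMollerup.logGammaSeq y N)
      (log N - ∑ k ∈ Finset.range (N + 1), (y + k)⁻¹) y := by
  have hlog : ∀ k ∈ Finset.range (N + 1), HasDerivAt (fun y => log (y + k)) (y + k)⁻¹ y :=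
    fun k _ => by
      simpa using ((hasDerivAt_id' y).add_const (k : ℝ)).log (by positivity)
  unfold BohrMollerup.logGammaSeq
  exact ((hasDerivAt_mul_const (log N)).add_const (log N.factorial)).sub
    (HasDerivAt.fun_sum hlog)

lemma abs_inv_succ_sub_inv_add_le {m y : ℝ} (hm : 0 < m) (hm1 : m ≤ 1) (hmy : m ≤ y)
    (k : ℕ) :
    |((k : ℝ) + 1)⁻¹ - (y + k)⁻¹| ≤ |y - 1| * ((m + k) ^ 2)⁻¹ := by
  have hk : (0 : ℝ) ≤ k := k.cast_nonneg
  have hyk : 0 < y + k := by linarith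
  have hdiff : ((k : ℝ) + 1)⁻¹ - (y + k)⁻¹ = (y - 1) * ((k + 1) * (y + k))⁻¹ := by
    field_simp
    ring
  rw [hdiff, abs_mul, abs_of_pos (by positivity : 0 < ((k + 1 : ℝ) * (y + k))⁻¹), sq]
  gcongr |y - 1| * ?_
  exact inv_anti₀ (by positivity)
    (mul_le_mul (by linarith) (by linarith) (by linarith) (by linarith))

lemma summable_inv_succ_sub_inv_add {x : ℝ} (hx : 0 < x) :
    Summable fun k : ℕ => ((k : ℝ) + 1)⁻¹ - (x + k)⁻¹ := by
  have hm : 0 < min x 1 := lt_min hx one_pos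
  refine Summable.of_norm_bounded ((summable_inv_add_pow le_rfl (min x 1)).mul_left |x - 1|)
    fun k => abs_inv_succ_sub_inv_add_le hm (min_le_right _ _) (min_le_left _ _) k

noncomputable def digammaSeries (x : ℝ) : ℝ :=
  -eulerMascheroniConstant + ∑' k : ℕ, (((k : ℝ) + 1)⁻¹ - (x + k)⁻¹)

lemma hasDerivAt_log_Gamma {x : ℝ} (hx : 0 < x) :
    HasDerivAt (fun y => log (Gamma y)) (digammaSeries x) x := by
  set m := min (x / 2) 1
  have hm : 0 < m := lt_min (by positivity) one_pos
  have hbound (k : ℕ) (y : ℝ) (hy : y ∈ Ioo (x / 2) (x + 1)) :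
      ‖((k : ℝ) + 1)⁻¹ - (y + k)⁻¹‖ ≤ (x + 1) * ((m + k) ^ 2)⁻¹ := by
    have hy1 : |y - 1| ≤ x + 1 := abs_le.2 ⟨by linarith [hy.1], by linarith [hy.2]⟩
    exact (abs_inv_succ_sub_inv_add_le hm (min_le_right _ _)
      ((min_le_left _ _).trans hy.1.le) k).trans (by gcongr)
  have hseries : TendstoUniformlyOn
      (fun (N : ℕ) (y : ℝ) => ∑ k ∈ Finset.range (N + 1), (((k : ℝ) + 1)⁻¹ - (y + k)⁻¹))
      (fun y : ℝ => ∑' k : ℕ, (((k : ℝ) + 1)⁻¹ - (y + k)⁻¹)) atTop (Ioo (x / 2) (x + 1)) :=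
    fun v hv => (tendsto_add_atTop_nat 1).eventually (tendstoUniformlyOn_tsum_nat
      ((summable_inv_add_pow le_rfl m).mul_left (x + 1)) hbound v hv)
  refine hasDerivAt_of_tendstoUniformlyOn isOpen_Ioo
    ((tendsto_harmonic_succ_sub_log.neg.tendstoUniformlyOn_const _).add hseries)
    (Eventually.of_forall fun N y hy =>
      (hasDerivAt_logGammaSeq N (by linarith [hy.1])).congr_deriv ?_)
    (fun y hy => BohrMollerup.tendsto_log_gamma (by linarith [hy.1])) ⟨by linarith, by linarith⟩
  simp only [Pi.add_apply, Finset.sum_sub_distrib]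
  push_cast [harmonic]
  ring

lemma hasDerivAt_digammaSeries {x : ℝ} (hx : 0 < x) :
    HasDerivAt digammaSeries (hurwitzNat 2 x) x := by
  have hmem : x ∈ Ioi (x / 2) := by simp [hx]
  have hle (k : ℕ) {y : ℝ} (hy : y ∈ Ioi (x / 2)) : x / 2 + k ≤ y + k := by
    simpa using hy.le
  have hbound (k : ℕ) (y : ℝ) (hy : y ∈ Ioi (x / 2)) :
      ‖((y + k) ^ 2)⁻¹‖ ≤ ((x / 2 + k) ^ 2)⁻¹ := by
    rw [Real.norm_of_nonneg (by positivity)]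
    gcongr
    exact le_of_lt hy
  refine (hasDerivAt_tsum_of_isPreconnected (summable_inv_add_pow le_rfl (x / 2)) isOpen_Ioi
    isPreconnected_Ioi (g := fun (k : ℕ) (y : ℝ) => ((k : ℝ) + 1)⁻¹ - (y + k)⁻¹)
    (fun k y hy => ?_) hbound hmem (summable_inv_succ_sub_inv_add hx) hmem).const_add _
  have hyk : y + k ≠ 0 := (lt_of_lt_of_le (by positivity) (hle k hy)).ne'
  refine (((hasDerivAt_id' y).add_const (k : ℝ)).fun_inv hyk).const_sub _ |>.congr_deriv ?_
  simp [neg_div]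

lemma polygamma_succ (n : ℕ) : polygamma (n + 1) = deriv (polygamma n) := by
  funext x
  exact congrFun iteratedDeriv_succ x

lemma polygamma_zero_eq {x : ℝ} (hx : 0 < x) : polygamma 0 x = digammaSeries x :=
  (congrFun iteratedDeriv_one x).trans (hasDerivAt_log_Gamma hx).deriv

lemma polygamma_succ_eq (n : ℕ) {x : ℝ} (hx : 0 < x) :
    polygamma (n + 1) x = (-1) ^ n * (n + 1).factorial * hurwitzNat (n + 2) x := by
  induction n generalizing x with
  | zero =>
    have h : polygamma 0 =ᶠ[𝓝 x] digammaSeries :=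
      (eventually_gt_nhds hx).mono fun y hy => polygamma_zero_eq hy
    rw [polygamma_succ, h.deriv_eq, (hasDerivAt_digammaSeries hx).deriv]
    simp
  | succ n ih =>
    have h : polygamma (n + 1) =ᶠ[𝓝 x]
        fun y => (-1) ^ n * (n + 1).factorial * hurwitzNat (n + 2) y :=
      (eventually_gt_nhds hx).mono fun y hy => ih hy
    rw [polygamma_succ, h.deriv_eq, ((hasDerivAt_hurwitzNat (by omega) hx).const_mul _).deriv,
      Nat.factorial_succ (n + 1)]
    push_cast
    ring

lemma hasDerivAt_polygamma (n : ℕ) {x : ℝ} (hx : 0 < x) :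
    HasDerivAt (polygamma n) (polygamma (n + 1) x) x := by
  rw [polygamma_succ]
  refine DifferentiableAt.hasDerivAt ?_
  rcases n with _ | n
  · exact (hasDerivAt_digammaSeries hx).differentiableAt.congr_of_eventuallyEq
      ((eventually_gt_nhds hx).mono fun y hy => polygamma_zero_eq hy)
  · exact ((hasDerivAt_hurwitzNat (by omega) hx).const_mul _).differentiableAt
      |>.congr_of_eventuallyEq ((eventually_gt_nhds hx).mono fun y hy => polygamma_succ_eq n hy)

lemma neg_one_pow_mul_polygamma_succ_pos (n : ℕ) {x : ℝ} (hx : 0 < x) :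
    0 < (-1) ^ n * polygamma (n + 1) x := by
  rw [polygamma_succ_eq n hx, ← mul_assoc, ← mul_assoc, ← pow_add, ← two_mul, pow_mul]
  have := hurwitzNat_pos (p := n + 2) (by omega) hx
  simp only [neg_one_sq, one_pow, one_mul]
  positivity

lemma sq_polygamma_lt (n : ℕ) {x : ℝ} (hx : 0 < x) :
    polygamma (n + 2) x ^ 2 < polygamma (n + 1) x * polygamma (n + 3) x := by
  have hsign : ((-1 : ℝ) ^ n) ^ 2 = 1 := by rw [← pow_mul, pow_mul', neg_one_sq, one_pow]
  have hprod : polygamma (n + 1) x * polygamma (n + 3) x = (n + 2) * (n + 3) *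
      ((n + 1).factorial : ℝ) ^ 2 * (hurwitzNat (n + 2) x * hurwitzNat (n + 4) x) := by
    rw [polygamma_succ_eq n hx, polygamma_succ_eq (n + 2) hx, Nat.factorial_succ (n + 2),
      Nat.factorial_succ (n + 1)]
    push_cast
    linear_combination (n + 2) * (n + 3) * ((n + 1).factorial : ℝ) ^ 2 *
      (hurwitzNat (n + 2) x * hurwitzNat (n + 4) x) * hsign
  have hsq : polygamma (n + 2) x ^ 2 =
      (n + 2) ^ 2 * ((n + 1).factorial : ℝ) ^ 2 * hurwitzNat (n + 3) x ^ 2 := by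
    rw [polygamma_succ_eq (n + 1) hx, Nat.factorial_succ (n + 1)]
    push_cast
    linear_combination
      (n + 2) ^ 2 * ((n + 1).factorial : ℝ) ^ 2 * hurwitzNat (n + 3) x ^ 2 * hsign
  have hcs := sq_hurwitzNat_le (p := n + 2) (by omega) hx
  have hζ := mul_pos (hurwitzNat_pos (p := n + 2) (by omega) hx)
    (hurwitzNat_pos (p := n + 4) (by omega) hx)
  rw [hprod, hsq]
  calc (n + 2) ^ 2 * ((n + 1).factorial : ℝ) ^ 2 * hurwitzNat (n + 3) x ^ 2
      ≤ (n + 2) ^ 2 * ((n + 1).factorial : ℝ) ^ 2 *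
          (hurwitzNat (n + 2) x * hurwitzNat (n + 4) x) := by gcongr
    _ < (n + 2) * (n + 3) * ((n + 1).factorial : ℝ) ^ 2 *
          (hurwitzNat (n + 2) x * hurwitzNat (n + 4) x) := by
        gcongr
        rw [sq]
        gcongr
        linarith

lemma polygamma_one_pos {x : ℝ} (hx : 0 < x) : 0 < polygamma 1 x := by
  simpa using neg_one_pow_mul_polygamma_succ_pos 0 hx

lemma polygamma_two_neg {x : ℝ} (hx : 0 < x) : polygamma 2 x < 0 := by
  simpa using neg_one_pow_mul_polygamma_succ_pos 1 hx

lemma strictAntiOn_polygamma_one : StrictAntiOn (polygamma 1) (Ioi 0) := by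
  refine strictAntiOn_of_deriv_neg (convex_Ioi 0)
    (fun x hx => (hasDerivAt_polygamma 1 hx).continuousAt.continuousWithinAt) fun x hx => ?_
  rw [interior_Ioi] at hx
  rw [(hasDerivAt_polygamma 1 hx).deriv]
  exact polygamma_two_neg hx

theorem Set.RightInvOn.strictAntiOn {α β : Type*} [LinearOrder α] [LinearOrder β]
    {f : α → β} {g : β → α} {s : Set α} {t : Set β} (hfg : RightInvOn g f t) (hf : AntitoneOn f s)
    (hg : MapsTo g t s) : StrictAntiOn g t := by
  intro a ha b hb hab
  by_contra! h
  have := hf (hg ha) (hg hb) h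
  rw [hfg ha, hfg hb] at this
  exact this.not_gt hab

theorem Set.InvOn.continuousOn_of_antitoneOn {α β : Type*} [LinearOrder α] [TopologicalSpace α]
    [OrderTopology α] [DenselyOrdered α] [LinearOrder β] [TopologicalSpace β] [OrderTopology β]
    {f : α → β} {g : β → α} {s : Set α} {t : Set β} (hinv : InvOn g f s t)
    (hf : AntitoneOn f s) (hfs : MapsTo f s t) (hg : MapsTo g t s) (hs : IsOpen s)
    (ht : IsOpen t) : ContinuousOn g t := by
  have himage : g '' t = s := (hinv.symm.bijOn hg hfs).image_eq
  intro y hy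
  have hnhds : g '' t ∈ 𝓝 (g y) := himage ▸ hs.mem_nhds (hg hy)
  exact (StrictMonoOn.continuousAt_of_image_mem_nhds (β := αᵒᵈ) (hinv.2.strictAntiOn hf hg)
    (ht.mem_nhds hy) hnhds).continuousWithinAt

theorem strictConcaveOn_comp_of_rightInvOn {f f' f'' f''' g : ℝ → ℝ} {s t : Set ℝ}
    (ht : IsOpen t) (htc : Convex ℝ t) (hf : ∀ x ∈ s, HasDerivAt f (f' x) x)
    (hf' : ∀ x ∈ s, HasDerivAt f' (f'' x) x) (hf'' : ∀ x ∈ s, HasDerivAt f'' (f''' x) x)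
    (hneg : ∀ x ∈ s, f' x < 0) (hlt : ∀ x ∈ s, f'' x ^ 2 < f' x * f''' x)
    (hg : ContinuousOn g t) (hgs : MapsTo g t s) (hfg : RightInvOn g f t) :
    StrictConcaveOn ℝ t (fun y => f' (g y)) := by
  have hderiv_g (y) (hy : y ∈ t) : HasDerivAt g (f' (g y))⁻¹ y :=
    .of_local_left_inverse (hg.continuousAt (ht.mem_nhds hy)) (hf _ (hgs hy)) (hneg _ (hgs hy)).ne
      (eventually_of_mem (ht.mem_nhds hy) fun z hz => hfg hz)
  have hderiv (y) (hy : y ∈ t) :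
      HasDerivAt (fun y => f' (g y)) (f'' (g y) * (f' (g y))⁻¹) y :=
    (hf' _ (hgs hy)).comp y (hderiv_g y hy)
  have hderiv2 (y) (hy : y ∈ t) : HasDerivAt (fun y => f'' (g y) * (f' (g y))⁻¹)
      ((f' (g y) * f''' (g y) - f'' (g y) ^ 2) / f' (g y) ^ 3) y := by
    have hne := (hneg _ (hgs hy)).ne
    refine (((hf'' _ (hgs hy)).comp y (hderiv_g y hy)).mul
      ((hf' _ (hgs hy)).comp y (hderiv_g y hy) |>.inv hne)).congr_deriv ?_
    simp only [Function.comp_apply, Pi.inv_apply]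
    field_simp
    ring
  refine strictConcaveOn_of_deriv2_neg' htc
    (fun y hy => (hderiv y hy).continuousAt.continuousWithinAt) fun y hy => ?_
  have hd : deriv (fun y => f' (g y)) =ᶠ[𝓝 y] fun y => f'' (g y) * (f' (g y))⁻¹ :=
    eventually_of_mem (ht.mem_nhds hy) fun z hz => (hderiv z hz).deriv
  rw [Function.iterate_succ_apply, Function.iterate_one, hd.deriv_eq, (hderiv2 y hy).deriv]
  exact div_neg_of_pos_of_neg (sub_pos.2 (hlt _ (hgs hy)))
    (Odd.pow_neg (by decide) (hneg _ (hgs hy)))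

/-- Lemma `psi-con`: for every `x > 0`, `ψ₂(x)·ψ₄(x) > ψ₃(x)²`; consequently, for any
function `g` that is the inverse on `(0,∞)` of the strictly decreasing bijection
`ψ₁ : (0,∞) → (0,∞)`, the composition `ψ₂ ∘ g` is strictly concave on `(0,∞)`. -/
theorem polygamma_inequality_and_strict_concavity :
    (∀ x : ℝ, 0 < x → polygamma 3 x ^ 2 < polygamma 2 x * polygamma 4 x) ∧
    ∀ g : ℝ → ℝ, Set.MapsTo g (Set.Ioi 0) (Set.Ioi 0) →
      Set.InvOn g (polygamma 1) (Set.Ioi 0) (Set.Ioi 0) →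
      StrictConcaveOn ℝ (Set.Ioi 0) (fun y => polygamma 2 (g y)) := by
  refine ⟨fun x hx => sq_polygamma_lt 1 hx, fun g hmap hinv => ?_⟩
  have hcont : ContinuousOn g (Ioi 0) :=
    hinv.continuousOn_of_antitoneOn strictAntiOn_polygamma_one.antitoneOn
      (fun x hx => polygamma_one_pos hx) hmap isOpen_Ioi isOpen_Ioi
  exact strictConcaveOn_comp_of_rightInvOn isOpen_Ioi (convex_Ioi 0)
    (fun x hx => hasDerivAt_polygamma 1 hx) (fun x hx => hasDerivAt_polygamma 2 hx)
    (fun x hx => hasDerivAt_polygamma 3 hx) (fun x hx => polygamma_two_neg hx)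
    (fun x hx => sq_polygamma_lt 1 hx) hcont hmap hinv.2
end

section
/- Let p : ℤ² → (0,1) and for x ≤ z coordinatewise in ℤ² define F(x,z) = Σ over all up-right nearest-neighbor paths x = y₀, …, y_n = z (steps in {e₁, e₂}, e₁ = (1,0), e₂ = (0,1)) of ∏_{i<n} w(y_i, y_{i+1}), where w(y, y+e₁) = p(y) and w(y, y+e₂) = 1 − p(y). Fix a ≤ v coordinatewise in ℤ² and set y = v + e₁ + e₂; let 𝔹^{(−1)}_y = {y − i·e₁ : i ≥ 0}, 𝔹^{(−2)}_y = {y − j·e₂ : j ≥ 0}, and let f be a strictly positive function on 𝔹^{(−1)}_y ∪ 𝔹^{(−2)}_y. For x ≤ v and i ∈ {1,2}, define E_i(x) = Σ over all up-right nearest-neighbor paths x = y₀, …, y_m such that y₀, …, y_{m−1} are all ≤ v coordinatewise and y_m ∈ 𝔹^{(−i)}_y, of (∏_{k<m} w(y_k, y_{k+1})) · f(y_m). Then: (i) whenever a + e₁ ≤ v, one has E₂(a)·F(a+e₁, v) ≤ F(a, v)·E₂(a+e₁) and F(a, v)·E₁(a+e₁) ≤ E₁(a)·F(a+e₁, v);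 (ii) whenever a + e₂ ≤ v, one has E₁(a)·F(a+e₂, v) ≤ F(a, v)·E₁(a+e₂) and F(a, v)·E₂(a+e₂) ≤ E₂(a)·F(a+e₂, v). -/
open Finset

/-- The position just before step `i` of the up-right path started at `x` whose step
sequence is `s` (`s j = true` means step `e₁ = (1,0)`, `s j = false` means step
`e₂ = (0,1)`). -/
def stepPos (x : ℤ × ℤ) {n : ℕ} (s : Fin n → Bool) (i : Fin n) : ℤ × ℤ :=
  (x.1 + ((Finset.univ.filter fun j : Fin n => j < i ∧ s j = true).card : ℤ),
   x.2 + ((Finset.univ.filter fun j : Fin n => j < i ∧ s j = false).card : ℤ))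

/-- The endpoint of the up-right path started at `x` with step sequence `s`. -/
def endPos (x : ℤ × ℤ) {n : ℕ} (s : Fin n → Bool) : ℤ × ℤ :=
  (x.1 + ((Finset.univ.filter fun j : Fin n => s j = true).card : ℤ),
   x.2 + ((Finset.univ.filter fun j : Fin n => s j = false).card : ℤ))

/-- The weight `∏ᵢ w(yᵢ, yᵢ₊₁)` of the up-right path started at `x` with step sequence
`s`, where `w(y, y+e₁) = p(y)` and `w(y, y+e₂) = 1 − p(y)`. -/
def pathWeight (p : ℤ × ℤ → ℝ) (x : ℤ × ℤ) {n : ℕ} (s : Fin n → Bool) : ℝ :=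
  ∏ i : Fin n, if s i then p (stepPos x s i) else 1 - p (stepPos x s i)

/-- `walkF p x z`: the sum over all up-right nearest-neighbor paths from `x` to `z`
of their weights. -/
def walkF (p : ℤ × ℤ → ℝ) (x z : ℤ × ℤ) : ℝ :=
  ∑ s ∈ (Finset.univ : Finset (Fin (z.1 + z.2 - x.1 - x.2).toNat → Bool)).filter
      (fun s => endPos x s = z),
    pathWeight p x s

/-- `hitE p f v i x`: the sum over all up-right paths `x = y₀, …, y_m` with
`y₀, …, y_{m−1} ≤ v` and `y_m ∈ 𝔹^{(−i)}_{v+e₁+e₂}` of (path weight)·`f(y_m)`;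
here `𝔹^{(−1)}_y = {z : z.2 = y.2 ∧ z.1 ≤ y.1}` and
`𝔹^{(−2)}_y = {z : z.1 = y.1 ∧ z.2 ≤ y.2}` with `y = v + e₁ + e₂`.  Such a path has at
most `v.1 + v.2 + 2 − x.1 − x.2` steps. -/
def hitE (p f : ℤ × ℤ → ℝ) (v : ℤ × ℤ) (i : ℕ) (x : ℤ × ℤ) : ℝ :=
  ∑ m ∈ Finset.range ((v.1 + v.2 + 2 - x.1 - x.2).toNat + 1),
    ∑ s ∈ (Finset.univ : Finset (Fin m → Bool)).filter
        (fun s => (∀ j : Fin m, (stepPos x s j).1 ≤ v.1 ∧ (stepPos x s j).2 ≤ v.2) ∧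
          (if i = 1 then (endPos x s).2 = v.2 + 1 ∧ (endPos x s).1 ≤ v.1 + 1
           else (endPos x s).1 = v.1 + 1 ∧ (endPos x s).2 ≤ v.2 + 1)),
      pathWeight p x s * f (endPos x s)

/-! ### Auxiliary material -/

/-- The step vector: `e₁` for `true`, `e₂` for `false`. -/
def stp (b : Bool) : ℤ × ℤ := if b then (1, 0) else (0, 1)

lemma stepPos_zero (x : ℤ × ℤ) {n : ℕ} (s : Fin (n + 1) → Bool) :
    stepPos x s 0 = x := by
  simp [stepPos, Fin.not_lt_zero]

lemma stepPos_cons_succ (x : ℤ × ℤ) {n : ℕ} (b : Bool) (t : Fin n → Bool) (i : Fin n) :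
    stepPos x (Fin.cons b t) i.succ = stepPos (x + stp b) t i := by
  have h1 : ((univ.filter fun j : Fin (n+1) =>
        j < i.succ ∧ (Fin.cons b t : Fin (n+1) → Bool) j = true).card)
      = (if b = true then 1 else 0) + (univ.filter fun k : Fin n => k < i ∧ t k = true).card := by
    rw [Fin.card_filter_univ_succ'
      (fun j : Fin (n+1) => j < i.succ ∧ (Fin.cons b t : Fin (n+1) → Bool) j = true)]
    simp [Fin.succ_pos, Fin.succ_lt_succ_iff]
  have h2 : ((univ.filter fun j : Fin (n+1) =>
        j < i.succ ∧ (Fin.cons b t : Fin (n+1) → Bool) j = false).card)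
      = (if b = false then 1 else 0) + (univ.filter fun k : Fin n => k < i ∧ t k = false).card := by
    rw [Fin.card_filter_univ_succ'
      (fun j : Fin (n+1) => j < i.succ ∧ (Fin.cons b t : Fin (n+1) → Bool) j = false)]
    simp [Fin.succ_pos, Fin.succ_lt_succ_iff]
  cases b <;> simp [stepPos, stp, h1, h2, Prod.ext_iff] <;> ring

lemma endPos_cons (x : ℤ × ℤ) {n : ℕ} (b : Bool) (t : Fin n → Bool) :
    endPos x (Fin.cons b t) = endPos (x + stp b) t := by
  have h1 : ((univ.filter fun j : Fin (n+1) => (Fin.cons b t : Fin (n+1) → Bool) j = true).card)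
      = (if b = true then 1 else 0) + (univ.filter fun k : Fin n => t k = true).card := by
    rw [Fin.card_filter_univ_succ' (fun j : Fin (n+1) => (Fin.cons b t : Fin (n+1) → Bool) j = true)]
    simp
  have h2 : ((univ.filter fun j : Fin (n+1) => (Fin.cons b t : Fin (n+1) → Bool) j = false).card)
      = (if b = false then 1 else 0) + (univ.filter fun k : Fin n => t k = false).card := by
    rw [Fin.card_filter_univ_succ' (fun j : Fin (n+1) => (Fin.cons b t : Fin (n+1) → Bool) j = false)]
    simp
  cases b <;> simp [endPos, stp, h1, h2, Prod.ext_iff] <;> ring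

lemma pathWeight_cons (p : ℤ × ℤ → ℝ) (x : ℤ × ℤ) {n : ℕ} (b : Bool) (t : Fin n → Bool) :
    pathWeight p x (Fin.cons b t)
      = (if b then p x else 1 - p x) * pathWeight p (x + stp b) t := by
  unfold pathWeight
  rw [Fin.prod_univ_succ]
  congr 1
  · simp [stepPos_zero]
  · apply Finset.prod_congr rfl
    intro i _
    rw [Fin.cons_succ, stepPos_cons_succ]

lemma sum_pi_succ {n : ℕ} (g : (Fin (n + 1) → Bool) → ℝ) :
    ∑ s : Fin (n + 1) → Bool, g s
      = ∑ t : Fin n → Bool, (g (Fin.cons true t) + g (Fin.cons false t)) := by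
  rw [← Equiv.sum_comp (Fin.consEquiv (fun _ => Bool)) g, Fintype.sum_prod_type,
    Fintype.sum_bool, ← Finset.sum_add_distrib]
  rfl

lemma walkF_eq (p : ℤ × ℤ → ℝ) (x v : ℤ × ℤ) (n : ℕ)
    (h : (v.1 + v.2 - x.1 - x.2).toNat = n) :
    walkF p x v = ∑ s ∈ (Finset.univ : Finset (Fin n → Bool)).filter
      (fun s => endPos x s = v), pathWeight p x s := by
  subst h; rfl

lemma pathWeight_nonneg (p : ℤ × ℤ → ℝ) (hp : ∀ y, p y ∈ Set.Ioo (0:ℝ) 1)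
    (x : ℤ × ℤ) {n : ℕ} (s : Fin n → Bool) : 0 ≤ pathWeight p x s := by
  apply Finset.prod_nonneg
  intro i _
  split
  · exact (hp _).1.le
  · linarith [(hp (stepPos x s i)).2]

lemma walkF_nonneg (p : ℤ × ℤ → ℝ) (hp : ∀ y, p y ∈ Set.Ioo (0:ℝ) 1) (x v : ℤ × ℤ) :
    0 ≤ walkF p x v :=
  Finset.sum_nonneg fun s _ => pathWeight_nonneg p hp x s

lemma endPos_fin_zero (x : ℤ × ℤ) (s : Fin 0 → Bool) : endPos x s = x := by
  simp [endPos]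

lemma walkF_self (p : ℤ × ℤ → ℝ) (v : ℤ × ℤ) : walkF p v v = 1 := by
  rw [walkF_eq p v v 0 (by omega)]
  rw [Finset.filter_true_of_mem (fun s _ => endPos_fin_zero v s)]
  rw [Fintype.sum_eq_single ![] (fun s => by simp [Subsingleton.elim s ![]])]
  simp [pathWeight]

lemma walkF_zero₁ (p : ℤ × ℤ → ℝ) (x v : ℤ × ℤ) (h : v.1 < x.1) : walkF p x v = 0 := by
  apply Finset.sum_eq_zero
  intro s hs
  exfalso
  have h1 : (endPos x s).1 = v.1 := by rw [(Finset.mem_filter.1 hs).2]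
  unfold endPos at h1
  simp only at h1
  omega

lemma walkF_zero₂ (p : ℤ × ℤ → ℝ) (x v : ℤ × ℤ) (h : v.2 < x.2) : walkF p x v = 0 := by
  apply Finset.sum_eq_zero
  intro s hs
  exfalso
  have h1 : (endPos x s).2 = v.2 := by rw [(Finset.mem_filter.1 hs).2]
  unfold endPos at h1
  simp only at h1
  omega

lemma walkF_rec (p : ℤ × ℤ → ℝ) (x v : ℤ × ℤ)
    (hlt : x.1 + x.2 < v.1 + v.2) :
    walkF p x v = p x * walkF p (x + (1,0)) v + (1 - p x) * walkF p (x + (0,1)) v := by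
  obtain ⟨n, hn⟩ : ∃ n : ℕ, v.1 + v.2 - x.1 - x.2 = (n : ℤ) + 1 :=
    ⟨(v.1 + v.2 - x.1 - x.2 - 1).toNat, by omega⟩
  rw [walkF_eq p x v (n+1) (by omega)]
  rw [walkF_eq p (x + (1,0)) v n (by simp; omega)]
  rw [walkF_eq p (x + (0,1)) v n (by simp; omega)]
  rw [Finset.sum_filter, Finset.sum_filter, Finset.sum_filter]
  rw [sum_pi_succ, Finset.mul_sum, Finset.mul_sum, ← Finset.sum_add_distrib]
  apply Finset.sum_congr rfl
  intro t _
  have key : ∀ b : Bool,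
      (if endPos x (Fin.cons b t : Fin (n+1) → Bool) = v
        then pathWeight p x (Fin.cons b t : Fin (n+1) → Bool) else 0)
      = (if b then p x else 1 - p x) *
        (if endPos (x + stp b) t = v then pathWeight p (x + stp b) t else 0) := by
    intro b
    rw [endPos_cons, pathWeight_cons]
    split <;> ring
  rw [key true, key false]
  simp [stp]

lemma walkF_pos (p : ℤ × ℤ → ℝ) (hp : ∀ y, p y ∈ Set.Ioo (0:ℝ) 1) (v : ℤ × ℤ) :
    ∀ n : ℕ, ∀ x : ℤ × ℤ, x.1 ≤ v.1 → x.2 ≤ v.2 → v.1 + v.2 - x.1 - x.2 = (n : ℤ) →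
      0 < walkF p x v := by
  intro n
  induction n with
  | zero =>
    intro x h1 h2 h3
    have hx : x = v := Prod.ext (by omega) (by omega)
    rw [hx, walkF_self]
    norm_num
  | succ n ih =>
    intro x h1 h2 h3
    rw [walkF_rec p x v (by push_cast at h3; omega)]
    have hp1 := (hp x).1
    have hp2 := (hp x).2
    rcases lt_or_eq_of_le h1 with hlt | heq
    · have hpos := ih (x + (1,0)) (by simp; omega) (by simp; omega)
        (by simp only [Prod.fst_add, Prod.snd_add]; push_cast at h3 ⊢; omega)
      have hnn := walkF_nonneg p hp (x + (0,1)) v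
      nlinarith
    · have hlt2 : x.2 < v.2 := by push_cast at h3; omega
      have hpos := ih (x + (0,1)) (by simp; omega) (by simp; omega)
        (by simp only [Prod.fst_add, Prod.snd_add]; push_cast at h3 ⊢; omega)
      have hnn := walkF_nonneg p hp (x + (1,0)) v
      nlinarith

/-- inner sum of `hitE` for a fixed number of steps `m`. -/
def innE (p f : ℤ × ℤ → ℝ) (v : ℤ × ℤ) (i : ℕ) (x : ℤ × ℤ) (m : ℕ) : ℝ :=
  ∑ s ∈ (Finset.univ : Finset (Fin m → Bool)).filter
      (fun s => (∀ j : Fin m, (stepPos x s j).1 ≤ v.1 ∧ (stepPos x s j).2 ≤ v.2) ∧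
        (if i = 1 then (endPos x s).2 = v.2 + 1 ∧ (endPos x s).1 ≤ v.1 + 1
         else (endPos x s).1 = v.1 + 1 ∧ (endPos x s).2 ≤ v.2 + 1)),
    pathWeight p x s * f (endPos x s)

lemma hitE_eq (p f : ℤ × ℤ → ℝ) (v : ℤ × ℤ) (i : ℕ) (x : ℤ × ℤ) (M : ℕ)
    (h : (v.1 + v.2 + 2 - x.1 - x.2).toNat = M) :
    hitE p f v i x = ∑ m ∈ Finset.range (M + 1), innE p f v i x m := by
  subst h; rfl

lemma innE_nonneg (p f : ℤ × ℤ → ℝ) (hp : ∀ y, p y ∈ Set.Ioo (0:ℝ) 1) (v : ℤ × ℤ)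
    (hf : ∀ z : ℤ × ℤ,
      ((z.2 = v.2 + 1 ∧ z.1 ≤ v.1 + 1) ∨ (z.1 = v.1 + 1 ∧ z.2 ≤ v.2 + 1)) → 0 < f z)
    (i : ℕ) (x : ℤ × ℤ) (m : ℕ) : 0 ≤ innE p f v i x m := by
  apply Finset.sum_nonneg
  intro s hs
  have hc := (Finset.mem_filter.1 hs).2.2
  have hfz : 0 < f (endPos x s) := by
    apply hf
    by_cases hi : i = 1
    · rw [if_pos hi] at hc; exact Or.inl hc
    · rw [if_neg hi] at hc; exact Or.inr hc
  exact mul_nonneg (pathWeight_nonneg p hp x s) hfz.le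

lemma hitE_nonneg (p f : ℤ × ℤ → ℝ) (hp : ∀ y, p y ∈ Set.Ioo (0:ℝ) 1) (v : ℤ × ℤ)
    (hf : ∀ z : ℤ × ℤ,
      ((z.2 = v.2 + 1 ∧ z.1 ≤ v.1 + 1) ∨ (z.1 = v.1 + 1 ∧ z.2 ≤ v.2 + 1)) → 0 < f z)
    (i : ℕ) (x : ℤ × ℤ) : 0 ≤ hitE p f v i x := by
  rw [hitE_eq p f v i x _ rfl]
  exact Finset.sum_nonneg fun m _ => innE_nonneg p f hp v hf i x m

lemma innE_zero_steps (p f : ℤ × ℤ → ℝ) (v : ℤ × ℤ) (i : ℕ) (x : ℤ × ℤ) :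
    innE p f v i x 0
      = if (if i = 1 then x.2 = v.2 + 1 ∧ x.1 ≤ v.1 + 1
            else x.1 = v.1 + 1 ∧ x.2 ≤ v.2 + 1) then f x else 0 := by
  unfold innE
  have huniv : (Finset.univ : Finset (Fin 0 → Bool)) = {![]} := by
    apply Finset.eq_singleton_iff_unique_mem.2
    exact ⟨Finset.mem_univ _, fun s _ => Subsingleton.elim s ![]⟩
  rw [Finset.sum_filter, huniv, Finset.sum_singleton]
  have he : endPos x (![] : Fin 0 → Bool) = x := endPos_fin_zero x ![]
  have hw : pathWeight p x (![] : Fin 0 → Bool) = 1 := by simp [pathWeight]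
  have htriv : (∀ j : Fin 0, (stepPos x (![] : Fin 0 → Bool) j).1 ≤ v.1 ∧
      (stepPos x (![] : Fin 0 → Bool) j).2 ≤ v.2) := fun j => j.elim0
  rw [if_congr (and_iff_right htriv) rfl rfl, he, hw, one_mul]

lemma innE_succ_zero_of_out (p f : ℤ × ℤ → ℝ) (v : ℤ × ℤ) (i : ℕ) (x : ℤ × ℤ) (m : ℕ)
    (hout : v.1 < x.1 ∨ v.2 < x.2) :
    innE p f v i x (m + 1) = 0 := by
  apply Finset.sum_eq_zero
  intro s hs
  exfalso
  have hc := ((Finset.mem_filter.1 hs).2.1 0)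
  rw [stepPos_zero] at hc
  rcases hout with h | h <;> omega

lemma innE_succ (p f : ℤ × ℤ → ℝ) (v : ℤ × ℤ) (i : ℕ) (x : ℤ × ℤ) (m : ℕ)
    (hx1 : x.1 ≤ v.1) (hx2 : x.2 ≤ v.2) :
    innE p f v i x (m + 1)
      = p x * innE p f v i (x + (1,0)) m + (1 - p x) * innE p f v i (x + (0,1)) m := by
  unfold innE
  rw [Finset.sum_filter, Finset.sum_filter, Finset.sum_filter]
  rw [sum_pi_succ, Finset.mul_sum, Finset.mul_sum, ← Finset.sum_add_distrib]
  apply Finset.sum_congr rfl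
  intro t _
  have key : ∀ b : Bool,
      (if ((∀ j : Fin (m+1), (stepPos x (Fin.cons b t : Fin (m+1) → Bool) j).1 ≤ v.1 ∧
              (stepPos x (Fin.cons b t : Fin (m+1) → Bool) j).2 ≤ v.2) ∧
            (if i = 1 then (endPos x (Fin.cons b t : Fin (m+1) → Bool)).2 = v.2 + 1 ∧
                (endPos x (Fin.cons b t : Fin (m+1) → Bool)).1 ≤ v.1 + 1
             else (endPos x (Fin.cons b t : Fin (m+1) → Bool)).1 = v.1 + 1 ∧
                (endPos x (Fin.cons b t : Fin (m+1) → Bool)).2 ≤ v.2 + 1))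
        then pathWeight p x (Fin.cons b t : Fin (m+1) → Bool) *
          f (endPos x (Fin.cons b t : Fin (m+1) → Bool)) else 0)
      = (if b then p x else 1 - p x) *
        (if ((∀ j : Fin m, (stepPos (x + stp b) t j).1 ≤ v.1 ∧ (stepPos (x + stp b) t j).2 ≤ v.2) ∧
            (if i = 1 then (endPos (x + stp b) t).2 = v.2 + 1 ∧ (endPos (x + stp b) t).1 ≤ v.1 + 1
             else (endPos (x + stp b) t).1 = v.1 + 1 ∧ (endPos (x + stp b) t).2 ≤ v.2 + 1))
          then pathWeight p (x + stp b) t * f (endPos (x + stp b) t) else 0) := by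
    intro b
    have hcond : (∀ j : Fin (m+1), (stepPos x (Fin.cons b t : Fin (m+1) → Bool) j).1 ≤ v.1 ∧
        (stepPos x (Fin.cons b t : Fin (m+1) → Bool) j).2 ≤ v.2)
        ↔ (∀ j : Fin m, (stepPos (x + stp b) t j).1 ≤ v.1 ∧ (stepPos (x + stp b) t j).2 ≤ v.2) := by
      rw [Fin.forall_fin_succ]
      simp only [stepPos_zero, stepPos_cons_succ]
      exact ⟨fun h => h.2, fun h => ⟨⟨hx1, hx2⟩, h⟩⟩
    rw [endPos_cons, pathWeight_cons]
    rw [if_congr (and_congr hcond Iff.rfl) rfl rfl]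
    split <;> split <;> ring
  rw [key true, key false]
  simp [stp]

lemma hitE_rec (p f : ℤ × ℤ → ℝ) (v : ℤ × ℤ) (i : ℕ) (x : ℤ × ℤ)
    (hx1 : x.1 ≤ v.1) (hx2 : x.2 ≤ v.2) :
    hitE p f v i x
      = p x * hitE p f v i (x + (1,0)) + (1 - p x) * hitE p f v i (x + (0,1)) := by
  obtain ⟨m0, hm0⟩ : ∃ m0 : ℕ, v.1 + v.2 + 2 - x.1 - x.2 = (m0 : ℤ) + 2 :=
    ⟨(v.1 + v.2 - x.1 - x.2).toNat, by omega⟩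
  rw [hitE_eq p f v i x (m0 + 2) (by omega)]
  rw [hitE_eq p f v i (x + (1,0)) (m0 + 1) (by simp; omega)]
  rw [hitE_eq p f v i (x + (0,1)) (m0 + 1) (by simp; omega)]
  rw [Finset.sum_range_succ']
  have h0 : innE p f v i x 0 = 0 := by
    rw [innE_zero_steps, if_neg]
    split
    · intro h; omega
    · intro h; omega
  rw [h0, add_zero, Finset.mul_sum, Finset.mul_sum, ← Finset.sum_add_distrib]
  exact Finset.sum_congr rfl fun m _ => innE_succ p f v i x m hx1 hx2

lemma hitE_right_2 (p f : ℤ × ℤ → ℝ) (v z : ℤ × ℤ) (hz1 : z.1 = v.1 + 1) (hz2 : z.2 ≤ v.2 + 1) :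
    hitE p f v 2 z = f z := by
  rw [hitE_eq p f v 2 z _ rfl, Finset.sum_range_succ']
  have h0 : innE p f v 2 z 0 = f z := by
    rw [innE_zero_steps, if_pos (by rw [if_neg (by norm_num)]; exact ⟨hz1, hz2⟩)]
  rw [h0, Finset.sum_eq_zero, zero_add]
  intro m _
  exact innE_succ_zero_of_out p f v 2 z m (Or.inl (by omega))

lemma hitE_right_1 (p f : ℤ × ℤ → ℝ) (v z : ℤ × ℤ) (hz1 : z.1 = v.1 + 1) (hz2 : z.2 ≤ v.2) :
    hitE p f v 1 z = 0 := by
  rw [hitE_eq p f v 1 z _ rfl, Finset.sum_range_succ']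
  have h0 : innE p f v 1 z 0 = 0 := by
    rw [innE_zero_steps, if_neg (by rw [if_pos rfl]; omega)]
  rw [h0, Finset.sum_eq_zero, zero_add]
  intro m _
  exact innE_succ_zero_of_out p f v 1 z m (Or.inl (by omega))

lemma hitE_top_1 (p f : ℤ × ℤ → ℝ) (v z : ℤ × ℤ) (hz2 : z.2 = v.2 + 1) (hz1 : z.1 ≤ v.1 + 1) :
    hitE p f v 1 z = f z := by
  rw [hitE_eq p f v 1 z _ rfl, Finset.sum_range_succ']
  have h0 : innE p f v 1 z 0 = f z := by
    rw [innE_zero_steps, if_pos (by rw [if_pos rfl]; exact ⟨hz2, hz1⟩)]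
  rw [h0, Finset.sum_eq_zero, zero_add]
  intro m _
  exact innE_succ_zero_of_out p f v 1 z m (Or.inr (by omega))

lemma hitE_top_2 (p f : ℤ × ℤ → ℝ) (v z : ℤ × ℤ) (hz2 : z.2 = v.2 + 1) (hz1 : z.1 ≤ v.1) :
    hitE p f v 2 z = 0 := by
  rw [hitE_eq p f v 2 z _ rfl, Finset.sum_range_succ']
  have h0 : innE p f v 2 z 0 = 0 := by
    rw [innE_zero_steps, if_neg (by rw [if_neg (by norm_num)]; omega)]
  rw [h0, Finset.sum_eq_zero, zero_add]
  intro m _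
  exact innE_succ_zero_of_out p f v 2 z m (Or.inr (by omega))

/-- The main induction: the four cross-multiplied ratio inequalities, for every point
`x ≤ v`, by strong induction on the distance `v.1 + v.2 - x.1 - x.2`. -/
lemma key_induction (p f : ℤ × ℤ → ℝ) (hp : ∀ y, p y ∈ Set.Ioo (0:ℝ) 1) (v : ℤ × ℤ)
    (hf : ∀ z : ℤ × ℤ,
      ((z.2 = v.2 + 1 ∧ z.1 ≤ v.1 + 1) ∨ (z.1 = v.1 + 1 ∧ z.2 ≤ v.2 + 1)) → 0 < f z) :
    ∀ n : ℕ, ∀ x : ℤ × ℤ, x.1 ≤ v.1 → x.2 ≤ v.2 → v.1 + v.2 - x.1 - x.2 = (n : ℤ) →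
      (hitE p f v 2 x * walkF p (x + (1,0)) v ≤ walkF p x v * hitE p f v 2 (x + (1,0)) ∧
       walkF p x v * hitE p f v 1 (x + (1,0)) ≤ hitE p f v 1 x * walkF p (x + (1,0)) v) ∧
      (hitE p f v 1 x * walkF p (x + (0,1)) v ≤ walkF p x v * hitE p f v 1 (x + (0,1)) ∧
       walkF p x v * hitE p f v 2 (x + (0,1)) ≤ hitE p f v 2 x * walkF p (x + (0,1)) v) := by
  intro n
  induction n using Nat.strong_induction_on with
  | _ n ih =>
  intro x hx1 hx2 hd
  -- abbreviations
  set F1 := walkF p (x + (1,0)) v with hF1def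
  set F2 := walkF p (x + (0,1)) v with hF2def
  set E11 := hitE p f v 1 (x + (1,0)) with hE11def
  set E12 := hitE p f v 1 (x + (0,1)) with hE12def
  set E21 := hitE p f v 2 (x + (1,0)) with hE21def
  set E22 := hitE p f v 2 (x + (0,1)) with hE22def
  have hF1nn : 0 ≤ F1 := walkF_nonneg p hp _ v
  have hF2nn : 0 ≤ F2 := walkF_nonneg p hp _ v
  have hE11nn : 0 ≤ E11 := hitE_nonneg p f hp v hf 1 _
  have hE12nn : 0 ≤ E12 := hitE_nonneg p f hp v hf 1 _
  have hE21nn : 0 ≤ E21 := hitE_nonneg p f hp v hf 2 _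
  have hE22nn : 0 ≤ E22 := hitE_nonneg p f hp v hf 2 _
  have hp1 := (hp x).1
  have hp2 := (hp x).2
  -- the two key diagonal inequalities S1 and S2
  have hS1 : F2 * E11 ≤ E12 * F1 := by
    rcases eq_or_lt_of_le hx1 with heq1 | hlt1
    · -- x.1 = v.1 : both sides vanish
      have hz1 : E11 = 0 := by
        rw [hE11def]
        exact hitE_right_1 p f v _ (by simp; omega) (by simp; omega)
      have hz2 : F1 = 0 := by
        rw [hF1def]
        exact walkF_zero₁ p _ v (by simp; omega)
      rw [hz1, hz2]; norm_num
    rcases eq_or_lt_of_le hx2 with heq2 | hlt2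
    · -- x.2 = v.2 : LHS vanishes, RHS nonnegative
      have hz2 : F2 = 0 := by
        rw [hF2def]
        exact walkF_zero₂ p _ v (by simp; omega)
      rw [hz2, zero_mul]
      exact mul_nonneg hE12nn hF1nn
    · -- interior case: chain through the corner x + (1,0) + (0,1)
      have hn2 : 2 ≤ n := by omega
      have hcomm : x + (0,1) + (1,0) = x + (1,0) + (0,1) := add_right_comm x (0,1) (1,0)
      have h1 := ((ih (n-1) (by omega) (x + (0,1)) (by simp; omega) (by simp; omega)
        (by simp only [Prod.fst_add, Prod.snd_add]; push_cast; omega)).1).2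
      rw [hcomm] at h1
      have h2 := ((ih (n-1) (by omega) (x + (1,0)) (by simp; omega) (by simp; omega)
        (by simp only [Prod.fst_add, Prod.snd_add]; push_cast; omega)).2).1
      have hFZ : 0 < walkF p (x + (1,0) + (0,1)) v :=
        walkF_pos p hp v (n-2) _ (by simp; omega) (by simp; omega)
          (by simp only [Prod.fst_add, Prod.snd_add]; push_cast; omega)
      nlinarith [mul_le_mul_of_nonneg_left h2 hF2nn, mul_le_mul_of_nonneg_right h1 hF1nn]
  have hS2 : E22 * F1 ≤ F2 * E21 := by
    rcases eq_or_lt_of_le hx1 with heq1 | hlt1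
    · have hz2 : F1 = 0 := by
        rw [hF1def]
        exact walkF_zero₁ p _ v (by simp; omega)
      rw [hz2, mul_zero]
      exact mul_nonneg hF2nn hE21nn
    rcases eq_or_lt_of_le hx2 with heq2 | hlt2
    · have hz1 : E22 = 0 := by
        rw [hE22def]
        exact hitE_top_2 p f v _ (by simp; omega) (by simp; omega)
      have hz2 : F2 = 0 := by
        rw [hF2def]
        exact walkF_zero₂ p _ v (by simp; omega)
      rw [hz1, hz2]; norm_num
    · have hn2 : 2 ≤ n := by omega
      have hcomm : x + (0,1) + (1,0) = x + (1,0) + (0,1) := add_right_comm x (0,1) (1,0)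
      have h1 := ((ih (n-1) (by omega) (x + (0,1)) (by simp; omega) (by simp; omega)
        (by simp only [Prod.fst_add, Prod.snd_add]; push_cast; omega)).1).1
      rw [hcomm] at h1
      have h2 := ((ih (n-1) (by omega) (x + (1,0)) (by simp; omega) (by simp; omega)
        (by simp only [Prod.fst_add, Prod.snd_add]; push_cast; omega)).2).2
      have hFZ : 0 < walkF p (x + (1,0) + (0,1)) v :=
        walkF_pos p hp v (n-2) _ (by simp; omega) (by simp; omega)
          (by simp only [Prod.fst_add, Prod.snd_add]; push_cast; omega)
      nlinarith [mul_le_mul_of_nonneg_right h1 hF1nn, mul_le_mul_of_nonneg_left h2 hF2nn]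
  -- now the four top-level inequalities
  by_cases hxv : x = v
  · subst hxv
    have hFself : walkF p x x = 1 := walkF_self p x
    refine ⟨⟨?_, ?_⟩, ?_, ?_⟩
    · have hz : F1 = 0 := walkF_zero₁ p _ x (by simp)
      rw [hz, mul_zero, hFself, one_mul]; exact hE21nn
    · have hz : F1 = 0 := walkF_zero₁ p _ x (by simp)
      have hz1 : E11 = 0 := hitE_right_1 p f x _ (by simp) (by simp)
      rw [hz, hz1, mul_zero, mul_zero]
    · have hz : F2 = 0 := walkF_zero₂ p _ x (by simp)
      rw [hz, mul_zero, hFself, one_mul]; exact hE12nn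
    · have hz : F2 = 0 := walkF_zero₂ p _ x (by simp)
      have hz2 : E22 = 0 := hitE_top_2 p f x _ (by simp) (by simp)
      rw [hz, hz2, mul_zero, mul_zero]
  · have hlt : x.1 + x.2 < v.1 + v.2 := by
      rcases eq_or_lt_of_le hx1 with h1 | h1
      · rcases eq_or_lt_of_le hx2 with h2 | h2
        · exact absurd (Prod.ext h1 h2) hxv
        · omega
      · omega
    have hrF := walkF_rec p x v hlt
    have hrE1 := hitE_rec p f v 1 x hx1 hx2
    have hrE2 := hitE_rec p f v 2 x hx1 hx2
    rw [← hF1def, ← hF2def] at hrF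
    rw [← hE11def, ← hE12def] at hrE1
    rw [← hE21def, ← hE22def] at hrE2
    refine ⟨⟨?_, ?_⟩, ?_, ?_⟩
    · rw [hrF, hrE2]; nlinarith [hS2]
    · rw [hrF, hrE1]; nlinarith [hS1]
    · rw [hrF, hrE1]; nlinarith [hS1]
    · rw [hrF, hrE2]; nlinarith [hS2]

/-- Lemma `lm99`: comparison, in cross-multiplied form, between ratios of passage
probabilities `F(a,v)/F(a+eᵢ,v)` and ratios of the boundary expectations
`E_a[f(X_{τ⁻_y}); X_{τ⁻_y} ∈ 𝔹^{(−i)}_y]`, where `y = v + e₁ + e₂`. -/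
theorem hitting_expectation_ratio_comparison
    (p f : ℤ × ℤ → ℝ) (hp : ∀ y, p y ∈ Set.Ioo (0 : ℝ) 1)
    (a v : ℤ × ℤ) (hav : a ≤ v)
    (hf : ∀ z : ℤ × ℤ,
      ((z.2 = v.2 + 1 ∧ z.1 ≤ v.1 + 1) ∨ (z.1 = v.1 + 1 ∧ z.2 ≤ v.2 + 1)) → 0 < f z) :
    (a + (1, 0) ≤ v →
      hitE p f v 2 a * walkF p (a + (1, 0)) v ≤ walkF p a v * hitE p f v 2 (a + (1, 0)) ∧
      walkF p a v * hitE p f v 1 (a + (1, 0)) ≤ hitE p f v 1 a * walkF p (a + (1, 0)) v) ∧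
    (a + (0, 1) ≤ v →
      hitE p f v 1 a * walkF p (a + (0, 1)) v ≤ walkF p a v * hitE p f v 1 (a + (0, 1)) ∧
      walkF p a v * hitE p f v 2 (a + (0, 1)) ≤ hitE p f v 2 a * walkF p (a + (0, 1)) v) := by
  have ha1 : a.1 ≤ v.1 := (Prod.le_def.1 hav).1
  have ha2 : a.2 ≤ v.2 := (Prod.le_def.1 hav).2
  have h := key_induction p f hp v hf (v.1 + v.2 - a.1 - a.2).toNat a ha1 ha2 (by omega)
  exact ⟨fun _ => h.1, fun _ => h.2⟩
end
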